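/- arXiv:1903.10767 — 2 statements merged into one kernel-verified Lean document; each statement's English description precedes it below -/
import Mathlib

section
/- Let t, x₁, x₂, x₃ be real numbers with x_j > 4t > 0 for j = 1,2,3. Write (2m-1)!! = (2m)!/(2^m·m!). Then 4t²/( x₁²·x₂²·x₃²·((1 - 4t/x₁)·(1 - 4t/x₂)·(1 - 4t/x₃))^{3/2} ) = ∑_{n₁,n₂,n₃ ≥ 1} (2t)^{n₁+n₂+n₃-1} · ∏_{j=1}^3 ( ((2n_j - 1)!!/((n_j - 1)!)) · x_j^{-(n_j+1)} ), the triple series converging. -/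
open Finset

private def bb (n : ℕ) : ℕ := (2 * n + 1) * Nat.centralBinom n

private lemma bb_zero : bb 0 = 1 := by simp [bb, Nat.centralBinom]

private lemma bb_succ (n : ℕ) : (n + 1) * bb (n + 1) = (2 * (2 * n + 3)) * bb n := by
  have h := Nat.succ_mul_centralBinom_succ n
  unfold bb
  calc (n + 1) * ((2 * (n + 1) + 1) * Nat.centralBinom (n + 1))
      = (2 * n + 3) * ((n + 1) * Nat.centralBinom (n + 1)) := by ring
    _ = (2 * n + 3) * (2 * (2 * n + 1) * Nat.centralBinom n) := by rw [h]
    _ = (2 * (2 * n + 3)) * ((2 * n + 1) * Nat.centralBinom n) := by ring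

private lemma bb_sym (n : ℕ) :
    2 * ∑ i ∈ range (n + 1), i * (bb i * bb (n - i)) =
      n * ∑ i ∈ range (n + 1), bb i * bb (n - i) := by
  have h := Finset.sum_range_reflect (fun i => i * (bb i * bb (n - i))) (n + 1)
  simp only [Nat.add_sub_cancel] at h
  have key : ∀ j ∈ range (n + 1),
      j * (bb j * bb (n - j)) + (n - j) * (bb (n - j) * bb (n - (n - j)))
        = n * (bb j * bb (n - j)) := by
    intro j hj
    have hj' : j ≤ n := Nat.lt_succ_iff.mp (mem_range.mp hj)
    rw [Nat.sub_sub_self hj', mul_comm (bb (n - j)) (bb j), ← add_mul,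
      Nat.add_sub_cancel' hj']
  calc 2 * ∑ i ∈ range (n + 1), i * (bb i * bb (n - i))
      = ∑ j ∈ range (n + 1),
          (j * (bb j * bb (n - j)) + (n - j) * (bb (n - j) * bb (n - (n - j)))) := by
        rw [sum_add_distrib, h, two_mul]
    _ = ∑ j ∈ range (n + 1), n * (bb j * bb (n - j)) := sum_congr rfl key
    _ = n * ∑ i ∈ range (n + 1), bb i * bb (n - i) := by rw [mul_sum]

private lemma bb_conv (n : ℕ) :
    2 * ∑ i ∈ range (n + 1), bb i * bb (n - i) = (n + 1) * (n + 2) * 4 ^ n := by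
  induction n with
  | zero => decide
  | succ n ih =>
    have hT1 : ∑ i ∈ range (n + 2), i * (bb i * bb (n + 1 - i)) =
        4 * ∑ i ∈ range (n + 1), i * (bb i * bb (n - i))
          + 6 * ∑ i ∈ range (n + 1), bb i * bb (n - i) := by
      rw [Finset.sum_range_succ']
      simp only [Nat.succ_sub_succ, Nat.zero_mul, add_zero]
      rw [mul_sum, mul_sum, ← sum_add_distrib]
      refine sum_congr rfl fun j hj => ?_
      have hb := bb_succ j
      calc (j + 1) * (bb (j + 1) * bb (n - j)) = ((j + 1) * bb (j + 1)) * bb (n - j) := by ring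
        _ = (2 * (2 * j + 3)) * bb j * bb (n - j) := by rw [hb]
        _ = 4 * (j * (bb j * bb (n - j))) + 6 * (bb j * bb (n - j)) := by ring
    have h1 := bb_sym n
    have h2 := bb_sym (n + 1)
    have key : (n + 1) * (2 * ∑ i ∈ range (n + 2), bb i * bb (n + 1 - i)) =
        (n + 1) * ((n + 1 + 1) * (n + 1 + 2) * 4 ^ (n + 1)) := by
      have e1 : (n + 1) * (2 * ∑ i ∈ range (n + 2), bb i * bb (n + 1 - i))
          = 2 * (2 * ∑ i ∈ range (n + 2), i * (bb i * bb (n + 1 - i))) := by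
        rw [h2]; ring
      rw [e1, hT1]
      calc 2 * (2 * (4 * ∑ i ∈ range (n + 1), i * (bb i * bb (n - i))
              + 6 * ∑ i ∈ range (n + 1), bb i * bb (n - i)))
          = 8 * (2 * ∑ i ∈ range (n + 1), i * (bb i * bb (n - i)))
              + 24 * ∑ i ∈ range (n + 1), bb i * bb (n - i) := by ring
        _ = 8 * (n * ∑ i ∈ range (n + 1), bb i * bb (n - i))
              + 24 * ∑ i ∈ range (n + 1), bb i * bb (n - i) := by rw [h1]
        _ = (4 * n + 12) * (2 * ∑ i ∈ range (n + 1), bb i * bb (n - i)) := by ring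
        _ = (4 * n + 12) * ((n + 1) * (n + 2) * 4 ^ n) := by rw [ih]
        _ = (n + 1) * ((n + 1 + 1) * (n + 1 + 2) * 4 ^ (n + 1)) := by ring
    exact Nat.eq_of_mul_eq_mul_left (Nat.succ_pos n) key

private lemma two_mul_choose (n : ℕ) : 2 * Nat.choose (n + 2) 2 = (n + 1) * (n + 2) := by
  induction n with
  | zero => decide
  | succ n ih =>
    have : Nat.choose (n + 3) 2 = (n + 2) + Nat.choose (n + 2) 2 := by
      rw [show n + 3 = (n + 2) + 1 from rfl, Nat.choose_succ_succ (n + 2) 1,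
        Nat.choose_one_right]
    rw [show n + 1 + 2 = n + 3 from rfl, this, Nat.mul_add, ih]; ring

private lemma bb_conv' (n : ℕ) :
    ∑ i ∈ range (n + 1), bb i * bb (n - i) = Nat.choose (n + 2) 2 * 4 ^ n := by
  refine Nat.eq_of_mul_eq_mul_left (show 0 < 2 by norm_num) ?_
  rw [bb_conv, ← mul_assoc, two_mul_choose]

private lemma bb_le (n : ℕ) : bb n ≤ Nat.choose (n + 2) 2 * 4 ^ n := by
  rw [← bb_conv' n]
  have : bb n * bb (n - n) ≤ ∑ i ∈ range (n + 1), bb i * bb (n - i) :=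
    Finset.single_le_sum (f := fun i => bb i * bb (n - i)) (fun i _ => Nat.zero_le _)
      (self_mem_range_succ n)
  simpa [Nat.sub_self, bb_zero] using this

private lemma fact_eq (p : ℕ) :
    Nat.factorial (2 * (p + 1)) = 2 * bb p * (Nat.factorial (p + 1) * Nat.factorial p) := by
  have hcb : Nat.centralBinom p * Nat.factorial p * Nat.factorial p = Nat.factorial (2 * p) := by
    have h := Nat.choose_mul_factorial_mul_factorial (show p ≤ 2 * p by omega)
    rw [show 2 * p - p = p by omega] at h
    exact h
  rw [show 2 * (p + 1) = (2 * p + 1) + 1 by ring, Nat.factorial_succ, Nat.factorial_succ,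
    ← hcb, Nat.factorial_succ, bb]
  ring

private lemma key_hasSum {u : ℝ} (hu0 : 0 ≤ u) (hu : 4 * u < 1) :
    HasSum (fun p : ℕ => (bb p : ℝ) * u ^ p) (((1 - 4 * u) ^ ((3 : ℝ) / 2))⁻¹) := by
  have h4 : ‖(4 * u : ℝ)‖ < 1 := by
    rw [Real.norm_eq_abs, abs_of_nonneg (by positivity)]; exact hu
  have hgs := hasSum_choose_mul_geometric_of_norm_lt_one (𝕜 := ℝ) 2 h4
  have hle : ∀ n : ℕ, (bb n : ℝ) * u ^ n ≤ ((n + 2).choose 2 : ℝ) * (4 * u) ^ n := by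
    intro n
    have h1 : (bb n : ℝ) ≤ ((n + 2).choose 2 : ℝ) * 4 ^ n := by
      exact_mod_cast Nat.cast_le.mpr (bb_le n)
    calc (bb n : ℝ) * u ^ n ≤ ((n + 2).choose 2 : ℝ) * 4 ^ n * u ^ n := by
          apply mul_le_mul_of_nonneg_right h1 (by positivity)
      _ = ((n + 2).choose 2 : ℝ) * (4 * u) ^ n := by rw [mul_pow]; ring
  have hsummable : Summable (fun p : ℕ => (bb p : ℝ) * u ^ p) :=
    Summable.of_nonneg_of_le (fun n => by positivity) hle hgs.summable
  have hS := hsummable.hasSum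
  set S := ∑' p : ℕ, (bb p : ℝ) * u ^ p with hSdef
  have hS0 : 0 ≤ S := tsum_nonneg fun n => by positivity
  have hnorm : Summable (fun p : ℕ => ‖(bb p : ℝ) * u ^ p‖) := by
    have : (fun p : ℕ => ‖(bb p : ℝ) * u ^ p‖) = fun p : ℕ => (bb p : ℝ) * u ^ p :=
      funext fun p => Real.norm_of_nonneg (by positivity)
    rw [this]; exact hsummable
  have hc : (0 : ℝ) < 1 - 4 * u := by linarith
  have inner : ∀ n : ℕ, (∑ kl ∈ antidiagonal n, ((bb kl.1 : ℝ) * u ^ kl.1) *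
      ((bb kl.2 : ℝ) * u ^ kl.2)) = ((n + 2).choose 2 : ℝ) * (4 * u) ^ n := by
    intro n
    rw [Finset.Nat.sum_antidiagonal_eq_sum_range_succ_mk]
    have : ∀ k ∈ range (n + 1), ((bb k : ℝ) * u ^ k) * ((bb (n - k) : ℝ) * u ^ (n - k))
        = ((bb k * bb (n - k) : ℕ) : ℝ) * u ^ n := by
      intro k hk
      have hk' : k ≤ n := Nat.lt_succ_iff.mp (mem_range.mp hk)
      push_cast
      rw [show ((bb k : ℝ) * u ^ k) * ((bb (n - k) : ℝ) * u ^ (n - k))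
          = (bb k : ℝ) * (bb (n - k) : ℝ) * (u ^ k * u ^ (n - k)) by ring,
        ← pow_add, Nat.add_sub_cancel' hk']
    rw [sum_congr rfl this, ← sum_mul, ← Nat.cast_sum, bb_conv' n]
    push_cast
    rw [mul_pow]
    ring
  have hsq : S * S = (1 / (1 - 4 * u) ^ 3 : ℝ) := by
    rw [hSdef, tsum_mul_tsum_eq_tsum_sum_antidiagonal_of_summable_norm hnorm hnorm]
    rw [tsum_congr inner, hgs.tsum_eq]
  set c := ((1 - 4 * u) ^ ((3 : ℝ) / 2))⁻¹ with hcdef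
  have hcpos : 0 < c := by
    rw [hcdef]; positivity
  have hcsq : c * c = (1 / (1 - 4 * u) ^ 3 : ℝ) := by
    rw [hcdef, ← mul_inv, ← Real.rpow_add hc]
    norm_num
  have hfinal : S = c := by
    have h1 : S * S = c * c := by rw [hsq, hcsq]
    calc S = Real.sqrt (S * S) := (Real.sqrt_mul_self hS0).symm
      _ = Real.sqrt (c * c) := by rw [h1]
      _ = c := Real.sqrt_mul_self hcpos.le
  rw [← hfinal]
  exact hS

private noncomputable def A (x : ℝ) (p : ℕ) : ℝ :=
  (((Nat.factorial (2 * (p + 1)) : ℝ) /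
      (2 ^ (p + 1) * (Nat.factorial (p + 1) : ℝ))) / (Nat.factorial p : ℝ)) / x ^ (p + 2)

private lemma A_nonneg {x : ℝ} (hx : 0 < x) (p : ℕ) : 0 ≤ A x p := by
  unfold A; positivity

private lemma key2 {t x : ℝ} (ht : 0 < t) (hx : 4 * t < x) :
    HasSum (fun p : ℕ => (2 * t) ^ p * A x p)
      ((x ^ 2)⁻¹ * ((1 - 4 * t / x) ^ ((3 : ℝ) / 2))⁻¹) := by
  have hx0 : 0 < x := lt_trans (by linarith) hx
  have hu0 : 0 ≤ t / x := by positivity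
  have hu : 4 * (t / x) < 1 := by
    rw [show 4 * (t / x) = 4 * t / x by ring, div_lt_one hx0]; linarith
  have h := (key_hasSum hu0 hu).mul_left (x ^ 2)⁻¹
  rw [show 4 * (t / x) = 4 * t / x by ring] at h
  have he : (fun p : ℕ => (x ^ 2)⁻¹ * ((bb p : ℝ) * (t / x) ^ p)) =
      (fun p : ℕ => (2 * t) ^ p * A x p) := by
    funext p
    have hf1 : (Nat.factorial (p + 1) : ℝ) ≠ 0 := Nat.cast_ne_zero.mpr (Nat.factorial_ne_zero _)
    have hf2 : (Nat.factorial p : ℝ) ≠ 0 := Nat.cast_ne_zero.mpr (Nat.factorial_ne_zero _)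
    have hxne : x ≠ 0 := ne_of_gt hx0
    have hfe : (Nat.factorial (2 * (p + 1)) : ℝ) =
        2 * (bb p : ℝ) * ((Nat.factorial (p + 1) : ℝ) * (Nat.factorial p : ℝ)) := by
      rw [fact_eq p]; push_cast; ring
    unfold A
    rw [hfe, mul_pow, div_pow]
    field_simp
    ring
  rw [he] at h
  exact h

set_option maxHeartbeats 1600000 in
/-- Taylor expansion of the genus-zero three-point function `G_{0,3}` of the modified GUE
model, where `(2m-1)!! = (2m)!/(2^m·m!)`; the triple series over `n₁,n₂,n₃ ≥ 1` is indexed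
here by `n_j = p_j + 1`. -/
theorem stmt_14 (t x₁ x₂ x₃ : ℝ) (ht : 0 < t)
    (h1 : 4 * t < x₁) (h2 : 4 * t < x₂) (h3 : 4 * t < x₃) :
    HasSum (fun p : ℕ × ℕ × ℕ =>
      (2 * t) ^ (p.1 + p.2.1 + p.2.2 + 2) *
        ((((Nat.factorial (2 * (p.1 + 1)) : ℝ) /
            (2 ^ (p.1 + 1) * (Nat.factorial (p.1 + 1) : ℝ))) / (Nat.factorial p.1 : ℝ)) /
          x₁ ^ (p.1 + 2)) *
        ((((Nat.factorial (2 * (p.2.1 + 1)) : ℝ) /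
            (2 ^ (p.2.1 + 1) * (Nat.factorial (p.2.1 + 1) : ℝ))) / (Nat.factorial p.2.1 : ℝ)) /
          x₂ ^ (p.2.1 + 2)) *
        ((((Nat.factorial (2 * (p.2.2 + 1)) : ℝ) /
            (2 ^ (p.2.2 + 1) * (Nat.factorial (p.2.2 + 1) : ℝ))) / (Nat.factorial p.2.2 : ℝ)) /
          x₃ ^ (p.2.2 + 2)))
      (4 * t ^ 2 / (x₁ ^ 2 * x₂ ^ 2 * x₃ ^ 2 *
        ((1 - 4 * t / x₁) * (1 - 4 * t / x₂) * (1 - 4 * t / x₃)) ^ ((3 : ℝ) / 2))) := by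
  have hx₁ : 0 < x₁ := lt_trans (by linarith) h1
  have hx₂ : 0 < x₂ := lt_trans (by linarith) h2
  have hx₃ : 0 < x₃ := lt_trans (by linarith) h3
  have hc₁ : (0:ℝ) < 1 - 4 * t / x₁ := by
    rw [sub_pos, div_lt_one hx₁]; linarith
  have hc₂ : (0:ℝ) < 1 - 4 * t / x₂ := by
    rw [sub_pos, div_lt_one hx₂]; linarith
  have hc₃ : (0:ℝ) < 1 - 4 * t / x₃ := by
    rw [sub_pos, div_lt_one hx₃]; linarith
  have hg₁ : HasSum (fun p : ℕ => (2 * t) ^ (p + 1) * A x₁ p)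
      ((2 * t) * ((x₁ ^ 2)⁻¹ * ((1 - 4 * t / x₁) ^ ((3 : ℝ) / 2))⁻¹)) := by
    have h := (key2 ht h1).mul_left (2 * t)
    have e : (fun p : ℕ => (2 * t) * ((2 * t) ^ p * A x₁ p)) =
        fun p : ℕ => (2 * t) ^ (p + 1) * A x₁ p :=
      funext fun p => by rw [pow_succ]; ring
    rw [e] at h; exact h
  have hg₂ : HasSum (fun p : ℕ => (2 * t) ^ (p + 1) * A x₂ p)
      ((2 * t) * ((x₂ ^ 2)⁻¹ * ((1 - 4 * t / x₂) ^ ((3 : ℝ) / 2))⁻¹)) := by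
    have h := (key2 ht h2).mul_left (2 * t)
    have e : (fun p : ℕ => (2 * t) * ((2 * t) ^ p * A x₂ p)) =
        fun p : ℕ => (2 * t) ^ (p + 1) * A x₂ p :=
      funext fun p => by rw [pow_succ]; ring
    rw [e] at h; exact h
  have hg₃ := key2 ht h3
  have h2nn : ∀ p : ℕ, 0 ≤ (2 * t) ^ (p + 1) * A x₂ p :=
    fun p => mul_nonneg (by positivity) (A_nonneg hx₂ p)
  have h3nn : ∀ p : ℕ, 0 ≤ (2 * t) ^ p * A x₃ p :=
    fun p => mul_nonneg (by positivity) (A_nonneg hx₃ p)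
  have h1nn : ∀ p : ℕ, 0 ≤ (2 * t) ^ (p + 1) * A x₁ p :=
    fun p => mul_nonneg (by positivity) (A_nonneg hx₁ p)
  have hsum23 : Summable (fun q : ℕ × ℕ =>
      ((2 * t) ^ (q.1 + 1) * A x₂ q.1) * ((2 * t) ^ q.2 * A x₃ q.2)) :=
    Summable.mul_of_nonneg hg₂.summable hg₃.summable h2nn h3nn
  have hg₂₃ := hg₂.mul hg₃ hsum23
  have h23nn : ∀ q : ℕ × ℕ, 0 ≤ ((2 * t) ^ (q.1 + 1) * A x₂ q.1) * ((2 * t) ^ q.2 * A x₃ q.2) :=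
    fun q => mul_nonneg (h2nn q.1) (h3nn q.2)
  have hsum123 : Summable (fun p : ℕ × ℕ × ℕ =>
      ((2 * t) ^ (p.1 + 1) * A x₁ p.1) *
        (((2 * t) ^ (p.2.1 + 1) * A x₂ p.2.1) * ((2 * t) ^ p.2.2 * A x₃ p.2.2))) :=
    Summable.mul_of_nonneg hg₁.summable hg₂₃.summable h1nn h23nn
  have hg := hg₁.mul hg₂₃ hsum123
  have hfe : (fun p : ℕ × ℕ × ℕ =>
      ((2 * t) ^ (p.1 + 1) * A x₁ p.1) *
        (((2 * t) ^ (p.2.1 + 1) * A x₂ p.2.1) * ((2 * t) ^ p.2.2 * A x₃ p.2.2))) =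
      (fun p : ℕ × ℕ × ℕ =>
      (2 * t) ^ (p.1 + p.2.1 + p.2.2 + 2) *
        ((((Nat.factorial (2 * (p.1 + 1)) : ℝ) /
            (2 ^ (p.1 + 1) * (Nat.factorial (p.1 + 1) : ℝ))) / (Nat.factorial p.1 : ℝ)) /
          x₁ ^ (p.1 + 2)) *
        ((((Nat.factorial (2 * (p.2.1 + 1)) : ℝ) /
            (2 ^ (p.2.1 + 1) * (Nat.factorial (p.2.1 + 1) : ℝ))) / (Nat.factorial p.2.1 : ℝ)) /
          x₂ ^ (p.2.1 + 2)) *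
        ((((Nat.factorial (2 * (p.2.2 + 1)) : ℝ) /
            (2 ^ (p.2.2 + 1) * (Nat.factorial (p.2.2 + 1) : ℝ))) / (Nat.factorial p.2.2 : ℝ)) /
          x₃ ^ (p.2.2 + 2))) := by
    funext p
    unfold A
    rw [show p.1 + p.2.1 + p.2.2 + 2 = (p.1 + 1) + ((p.2.1 + 1) + p.2.2) by ring,
      pow_add, pow_add]
    ring
  have hve : ((2 * t) * ((x₁ ^ 2)⁻¹ * ((1 - 4 * t / x₁) ^ ((3 : ℝ) / 2))⁻¹)) *
      (((2 * t) * ((x₂ ^ 2)⁻¹ * ((1 - 4 * t / x₂) ^ ((3 : ℝ) / 2))⁻¹)) *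
        ((x₃ ^ 2)⁻¹ * ((1 - 4 * t / x₃) ^ ((3 : ℝ) / 2))⁻¹)) =
      4 * t ^ 2 / (x₁ ^ 2 * x₂ ^ 2 * x₃ ^ 2 *
        ((1 - 4 * t / x₁) * (1 - 4 * t / x₂) * (1 - 4 * t / x₃)) ^ ((3 : ℝ) / 2)) := by
    rw [Real.mul_rpow (by positivity) hc₃.le, Real.mul_rpow hc₁.le hc₂.le]
    have p1 : (0:ℝ) < (1 - 4 * t / x₁) ^ ((3 : ℝ) / 2) := Real.rpow_pos_of_pos hc₁ _
    have p2 : (0:ℝ) < (1 - 4 * t / x₂) ^ ((3 : ℝ) / 2) := Real.rpow_pos_of_pos hc₂ _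
    have p3 : (0:ℝ) < (1 - 4 * t / x₃) ^ ((3 : ℝ) / 2) := Real.rpow_pos_of_pos hc₃ _
    field_simp
    ring
  rw [hfe, hve] at hg
  exact hg
end

section
/- Let t, x₀, x₁, x₂, x₃ be real numbers with x_j > 4t > 0 for j = 0,1,2,3, and let e_i denote the i-th elementary symmetric polynomial in x₀,x₁,x₂,x₃. Write (2m-1)!! = (2m)!/(2^m·m!). Then 24·t²·( e₄ - 2·e₃·t + 32·e₁·t³ - 256·t⁴ ) / ∏_{j=0}^3 ( x_j³·(1 - 4t/x_j)^{5/2} ) = ∑_{n₀,n₁,n₂,n₃ ≥ 1} 2^{n₀+n₁+n₂+n₃-1}·t^{n₀+n₁+n₂+n₃-2}·(n₀+n₁+n₂+n₃-1) · ∏_{j=0}^3 ( ((2n_j - 1)!!/((n_j - 1)!)) · x_j^{-(n_j+1)} ), the series converging. -/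
open Real Set Filter

noncomputable def poch (a : ℝ) : ℕ → ℝ
  | 0 => 1
  | n + 1 => poch a n * (a + n)

lemma poch_pos {a : ℝ} (ha : 0 < a) (n : ℕ) : 0 < poch a n := by
  induction n with
  | zero => norm_num [poch]
  | succ n ih =>
      rw [poch]
      exact mul_pos ih (add_pos_of_pos_of_nonneg ha (Nat.cast_nonneg n))

lemma poch_succ_div (a : ℝ) (n : ℕ) :
    ((n : ℝ) + 1) * (poch a (n + 1) / (n + 1).factorial) = (a + n) * (poch a n / n.factorial) := by
  have h1 : ((n + 1).factorial : ℝ) = ((n : ℝ) + 1) * n.factorial := by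
    push_cast [Nat.factorial_succ]; ring
  have h2 : (n.factorial : ℝ) ≠ 0 := Nat.cast_ne_zero.2 n.factorial_ne_zero
  have h3 : ((n : ℝ) + 1) ≠ 0 := by positivity
  rw [poch, h1]
  field_simp

lemma aux_sum (K : ℕ) {q : ℝ} (h0 : 0 ≤ q) (h1 : q < 1) :
    Summable (fun n : ℕ => ((n : ℝ) + 1) ^ K * q ^ n) := by
  rcases eq_or_lt_of_le h0 with h | h
  · apply summable_of_ne_finset_zero (s := {0})
    intro n hn
    simp only [Finset.mem_singleton] at hn
    rw [← h, zero_pow hn, mul_zero]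
  · have H : Summable (fun n : ℕ => (n : ℝ) ^ K * q ^ n) :=
      summable_pow_mul_geometric_of_norm_lt_one K (by rwa [Real.norm_eq_abs, abs_of_pos h])
    have H2 : Summable (fun n : ℕ => ((n + 1 : ℕ) : ℝ) ^ K * q ^ (n + 1)) :=
      (summable_nat_add_iff 1).2 H
    have H3 := H2.mul_left q⁻¹
    apply H3.congr
    intro n
    push_cast
    rw [pow_succ]
    field_simp

lemma binom_series {a : ℝ} (ha : 0 < a) (k : ℕ)
    (hbk : ∀ n : ℕ, poch a n ≤ ((n : ℝ) + 1) ^ k * n.factorial)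
    {u : ℝ} (hu : |u| < 1) :
    HasSum (fun n : ℕ => poch a n / n.factorial * u ^ n) ((1 - u) ^ (-a)) := by
  set b : ℕ → ℝ := fun n => poch a n / n.factorial with hbdef
  have hb_pos : ∀ n, 0 < b n := fun n =>
    div_pos (poch_pos ha n) (by positivity)
  have hb_le : ∀ n, b n ≤ ((n : ℝ) + 1) ^ k := by
    intro n
    rw [hbdef]
    rw [div_le_iff₀ (by positivity : (0:ℝ) < (n.factorial : ℝ))]
    exact hbk n
  -- summability of the series and related series for |y| < 1
  have hsumW : ∀ y : ℝ, |y| < 1 → Summable (fun n => b n * y ^ n) := by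
    intro y hy
    apply Summable.of_norm_bounded (aux_sum k (abs_nonneg y) hy)
    intro n
    have : ‖b n * y ^ n‖ = b n * |y| ^ n := by
      rw [norm_mul, Real.norm_eq_abs, Real.norm_eq_abs, abs_pow, abs_of_pos (hb_pos n)]
    rw [this]
    exact mul_le_mul (hb_le n) le_rfl (by positivity) (by positivity)
  have hsumNW : ∀ y : ℝ, |y| < 1 → Summable (fun n : ℕ => (n : ℝ) * (b n * y ^ n)) := by
    intro y hy
    apply Summable.of_norm_bounded (aux_sum (k + 1) (abs_nonneg y) hy)
    intro n
    have : ‖(n : ℝ) * (b n * y ^ n)‖ = (n : ℝ) * (b n * |y| ^ n) := by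
      rw [norm_mul, norm_mul, Real.norm_eq_abs ((n:ℝ)), Real.norm_eq_abs, Real.norm_eq_abs,
        abs_pow, abs_of_pos (hb_pos n), Nat.abs_cast]
    rw [this, pow_succ]
    have hyn : (0:ℝ) ≤ |y| ^ n := by positivity
    have h1 := hb_le n
    have h2 := (hb_pos n).le
    have h3 : (0:ℝ) ≤ (n:ℝ) := Nat.cast_nonneg n
    calc (n:ℝ) * (b n * |y| ^ n) ≤ ((n:ℝ)+1) * (((n:ℝ)+1) ^ k * |y| ^ n) :=
          mul_le_mul (by linarith) (mul_le_mul_of_nonneg_right h1 hyn) (by positivity)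
            (by positivity)
      _ = ((n:ℝ)+1) ^ k * ((n:ℝ)+1) * |y| ^ n := by ring
  have hsumD : ∀ y : ℝ, |y| < 1 → Summable (fun n => b n * ((n : ℝ) * y ^ (n - 1))) := by
    intro y hy
    rcases eq_or_ne y 0 with rfl | hy0
    · apply summable_of_ne_finset_zero (s := {1})
      intro n hn
      simp only [Finset.mem_singleton] at hn
      rcases n with _ | m
      · simp
      · have hm : m ≠ 0 := fun h => hn (by omega)
        have : m + 1 - 1 = m := by omega
        rw [this, zero_pow hm, mul_zero, mul_zero]
    · have hyy : (0:ℝ) < |y| := abs_pos.2 hy0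
      apply Summable.of_norm_bounded ((aux_sum (k+1) (abs_nonneg y) hy).mul_left |y|⁻¹)
      intro n
      have hne : ‖b n * ((n : ℝ) * y ^ (n-1))‖ = b n * ((n : ℝ) * |y| ^ (n-1)) := by
        rw [norm_mul, norm_mul, Real.norm_eq_abs ((n:ℝ)), Real.norm_eq_abs, Real.norm_eq_abs,
          abs_pow, abs_of_pos (hb_pos n), Nat.abs_cast]
      rw [hne]
      rcases n with _ | m
      · simp only [Nat.cast_zero, zero_mul, mul_zero]
        positivity
      · have hstep : |y| ^ (m + 1 - 1) = |y|⁻¹ * |y| ^ (m + 1) := by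
          simp only [Nat.add_sub_cancel, pow_succ]
          field_simp
        rw [hstep]
        have h2 : b (m+1) * ((m:ℝ)+1) ≤ (((m:ℝ)+1+1) ^ (k+1)) := by
          have h3 := hb_le (m+1)
          push_cast at h3
          have h4 : ((m:ℝ)+1) ≤ ((m:ℝ)+1+1) := by linarith
          calc b (m+1) * ((m:ℝ)+1) ≤ (((m:ℝ)+1+1) ^ k) * ((m:ℝ)+1+1) :=
                mul_le_mul h3 h4 (by positivity) (by positivity)
            _ = ((m:ℝ)+1+1) ^ (k+1) := by rw [pow_succ]
        have hrhs : |y|⁻¹ * ((((m+1:ℕ):ℝ)+1) ^ (k+1) * |y| ^ (m+1))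
            = (((m:ℝ)+1+1) ^ (k+1)) * (|y|⁻¹ * |y| ^ (m+1)) := by push_cast; ring
        rw [hrhs]
        calc b (m+1) * (((m+1:ℕ):ℝ) * (|y|⁻¹ * |y| ^ (m+1)))
            = (b (m+1) * ((m:ℝ)+1)) * (|y|⁻¹ * |y| ^ (m+1)) := by push_cast; ring
          _ ≤ (((m:ℝ)+1+1) ^ (k+1)) * (|y|⁻¹ * |y| ^ (m+1)) :=
              mul_le_mul_of_nonneg_right h2 (by positivity)
  -- uniform bound for derivatives
  have hbound : ∀ r : ℝ, 0 < r → ∀ n : ℕ, ∀ z : ℝ, |z| ≤ r →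
      ‖b n * ((n : ℝ) * z ^ (n - 1))‖ ≤ r⁻¹ * ((((n : ℝ) + 1) ^ (k + 1)) * r ^ n) := by
    intro r hr n z hz
    have hnorm : ‖b n * ((n : ℝ) * z ^ (n - 1))‖ = b n * ((n : ℝ) * |z| ^ (n - 1)) := by
      rw [norm_mul, norm_mul, Real.norm_eq_abs ((n : ℝ)), Real.norm_eq_abs, Real.norm_eq_abs,
        abs_pow, abs_of_pos (hb_pos n), Nat.abs_cast]
    rw [hnorm]
    rcases n with _ | m
    · simp only [Nat.cast_zero, zero_mul, mul_zero]
      positivity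
    · have hzr : |z| ^ m ≤ r ^ m := pow_le_pow_left₀ (abs_nonneg z) hz m
      have h2 : b (m + 1) * ((m : ℝ) + 1) ≤ ((m : ℝ) + 1 + 1) ^ (k + 1) := by
        have h3 := hb_le (m + 1)
        push_cast at h3
        calc b (m + 1) * ((m : ℝ) + 1) ≤ (((m : ℝ) + 1 + 1) ^ k) * ((m : ℝ) + 1 + 1) :=
              mul_le_mul h3 (by linarith) (by positivity) (by positivity)
          _ = ((m : ℝ) + 1 + 1) ^ (k + 1) := by rw [pow_succ]
      have hrhs : r⁻¹ * (((((m + 1 : ℕ) : ℝ)) + 1) ^ (k + 1) * r ^ (m + 1))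
          = (((m : ℝ) + 1 + 1) ^ (k + 1)) * r ^ m := by
        push_cast
        rw [pow_succ]
        field_simp
        ring
      rw [hrhs]
      calc b (m + 1) * (((m + 1 : ℕ) : ℝ) * |z| ^ (m + 1 - 1))
          = (b (m + 1) * ((m : ℝ) + 1)) * |z| ^ m := by push_cast; ring
        _ ≤ (((m : ℝ) + 1 + 1) ^ (k + 1)) * r ^ m := by
            apply mul_le_mul h2 hzr (by positivity) (by positivity)
  -- differentiability of the sum
  have hderivW : ∀ r : ℝ, 0 < r → r < 1 → ∀ y ∈ Ioo (-r) r,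
      HasDerivAt (fun z : ℝ => ∑' n : ℕ, b n * z ^ n)
        (∑' n : ℕ, b n * ((n : ℝ) * y ^ (n - 1))) y := by
    intro r hr0 hr1 y hy
    exact hasDerivAt_tsum_of_isPreconnected
      (g := fun (n : ℕ) (z : ℝ) => b n * z ^ n)
      (g' := fun (n : ℕ) (z : ℝ) => b n * ((n : ℝ) * z ^ (n - 1)))
      ((aux_sum (k + 1) hr0.le hr1).mul_left r⁻¹) isOpen_Ioo
      ((convex_Ioo _ _).isPreconnected)
      (fun n z _ => (hasDerivAt_pow n z).const_mul (b n))
      (fun n z hz => hbound r hr0 n z (le_of_lt (abs_lt.2 ⟨hz.1, hz.2⟩)))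
      (by constructor <;> linarith : (0 : ℝ) ∈ Ioo (-r) r)
      (hsumW 0 (by rw [abs_zero]; norm_num)) hy
  -- key functional identity for the derivative
  have hkey : ∀ y : ℝ, |y| < 1 →
      (1 - y) * (∑' n : ℕ, b n * ((n : ℝ) * y ^ (n - 1))) = a * ∑' n : ℕ, b n * y ^ n := by
    intro y hy
    have hD := hsumD y hy
    have hW := hsumW y hy
    have hNW := hsumNW y hy
    have hDs : Summable (fun n : ℕ => b (n + 1) * (((n : ℝ) + 1) * y ^ n)) := by
      have := (summable_nat_add_iff 1).2 hD
      apply this.congr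
      intro n
      push_cast
      congr 1
    have e1 : ∑' n : ℕ, b n * ((n : ℝ) * y ^ (n - 1))
        = ∑' n : ℕ, b (n + 1) * (((n : ℝ) + 1) * y ^ n) := by
      rw [hD.tsum_eq_zero_add]
      push_cast
      simp
    have e2 : y * ∑' n : ℕ, b n * ((n : ℝ) * y ^ (n - 1))
        = ∑' n : ℕ, (n : ℝ) * (b n * y ^ n) := by
      rw [← tsum_mul_left]
      apply tsum_congr
      intro n
      rcases n with _ | m
      · simp
      · have : m + 1 - 1 = m := rfl
        rw [this, pow_succ]
        push_cast
        ring
    have e3 : (1 - y) * (∑' n : ℕ, b n * ((n : ℝ) * y ^ (n - 1)))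
        = (∑' n : ℕ, b (n + 1) * (((n : ℝ) + 1) * y ^ n)) - ∑' n : ℕ, (n : ℝ) * (b n * y ^ n) := by
      rw [sub_mul, one_mul, e2, e1]
    rw [e3, ← Summable.tsum_sub hDs hNW, ← tsum_mul_left]
    apply tsum_congr
    intro n
    have hp := poch_succ_div a n
    have : b (n + 1) * (((n : ℝ) + 1) * y ^ n) - (n : ℝ) * (b n * y ^ n)
        = ((((n : ℝ) + 1) * b (n + 1)) - (n : ℝ) * b n) * y ^ n := by ring
    rw [this, hbdef]
    simp only []
    rw [hp]
    ring
  -- the sum equals the closed form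
  have hconst : ∀ v : ℝ, |v| < 1 → (1 - v) ^ a * ∑' n : ℕ, b n * v ^ n = 1 := by
    intro v hv
    set r : ℝ := (|v| + 1) / 2 with hrdef
    have hva : 0 ≤ |v| := abs_nonneg v
    have hr0 : 0 < r := by rw [hrdef]; positivity
    have hr1 : r < 1 := by rw [hrdef]; linarith
    have hvr : |v| < r := by rw [hrdef]; linarith
    set g : ℝ → ℝ := fun z => (1 - z) ^ a * ∑' n : ℕ, b n * z ^ n with hgdef
    have hg0 : ∀ z ∈ Ioo (-r : ℝ) r, HasDerivAt g 0 z := by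
      intro z hz
      have hz1 : |z| < 1 := by
        rw [abs_lt]
        exact ⟨by linarith [hz.1], by linarith [hz.2]⟩
      have h1z : (0 : ℝ) < 1 - z := by
        rw [abs_lt] at hz1
        linarith [hz1.2]
      have hWd := hderivW r hr0 hr1 z hz
      have hid : HasDerivAt (fun w : ℝ => 1 - w) (-1 : ℝ) z := (hasDerivAt_id z).const_sub 1
      have hp : HasDerivAt (fun w : ℝ => (1 - w) ^ a) ((-1) * a * (1 - z) ^ (a - 1)) z :=
        hid.rpow_const (Or.inl h1z.ne')
      have hcomb := hp.mul hWd
      have hrw : (1 - z) ^ a = (1 - z) ^ (a - 1) * (1 - z) := by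
        rw [← Real.rpow_add_one h1z.ne' (a - 1), sub_add_cancel]
      have hkz := hkey z hz1
      refine hcomb.congr_deriv ?_
      rw [hrw]
      linear_combination ((1 - z) ^ (a - 1)) * hkz
    have hg_eq : g v = g 0 := by
      rcases le_or_gt 0 v with hv0 | hv0
      · have hsub : Icc (0 : ℝ) v ⊆ Ioo (-r) r := by
          intro z hz
          exact ⟨by linarith [hz.1], by linarith [hz.2, le_abs_self v]⟩
        have hcont : ContinuousOn g (Icc 0 v) := fun z hz =>
          ((hg0 z (hsub hz)).continuousAt).continuousWithinAt
        have := constant_of_has_deriv_right_zero hcont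
          (fun z hz => ((hg0 z (hsub (Ico_subset_Icc_self hz))).hasDerivWithinAt)) v
          (right_mem_Icc.2 hv0)
        exact this
      · have hsub : Icc v (0 : ℝ) ⊆ Ioo (-r) r := by
          intro z hz
          have := neg_abs_le v
          exact ⟨by linarith [hz.1, neg_le_abs v, neg_abs_le v], by linarith [hz.2]⟩
        have hcont : ContinuousOn g (Icc v 0) := fun z hz =>
          ((hg0 z (hsub hz)).continuousAt).continuousWithinAt
        have := constant_of_has_deriv_right_zero hcont
          (fun z hz => ((hg0 z (hsub (Ico_subset_Icc_self hz))).hasDerivWithinAt)) 0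
          (right_mem_Icc.2 hv0.le)
        exact this.symm
    have hg_zero : g 0 = 1 := by
      rw [hgdef]
      simp only []
      have h1 : ∑' n : ℕ, b n * (0 : ℝ) ^ n = 1 := by
        rw [tsum_eq_single 0 (fun n hn => by rw [zero_pow hn, mul_zero])]
        rw [hbdef]
        simp [poch]
      rw [h1, sub_zero, Real.one_rpow, mul_one]
    calc (1 - v) ^ a * ∑' n : ℕ, b n * v ^ n = g v := rfl
      _ = 1 := by rw [hg_eq, hg_zero]
  have hW := hsumW u hu
  have h1u : (0 : ℝ) < 1 - u := by
    rw [abs_lt] at hu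
    linarith [hu.2]
  have hval : ∑' n : ℕ, b n * u ^ n = (1 - u) ^ (-a) := by
    rw [Real.rpow_neg h1u.le]
    exact (inv_eq_of_mul_eq_one_right (hconst u hu)).symm
  have := hW.hasSum
  rw [hval] at this
  exact this

lemma poch32_le (n : ℕ) : poch (3/2) n ≤ ((n : ℝ) + 1) ^ 1 * n.factorial := by
  induction n with
  | zero => norm_num [poch]
  | succ n ih =>
      rw [poch, Nat.factorial_succ]
      push_cast
      have h1 : (0:ℝ) ≤ (n:ℝ) := Nat.cast_nonneg n
      have h2 : (0:ℝ) < (n.factorial : ℝ) := by positivity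
      have h3 : poch (3/2) n * (3/2 + n) ≤ (((n:ℝ)+1) * n.factorial) * (3/2 + n) := by
        apply mul_le_mul_of_nonneg_right _ (by linarith)
        simpa using ih
      calc poch (3/2) n * (3/2 + (n:ℝ)) ≤ (((n:ℝ)+1) * n.factorial) * (3/2 + n) := h3
        _ ≤ ((n:ℝ) + 1 + 1) ^ 1 * (((n:ℝ) + 1) * n.factorial) := by nlinarith

lemma poch52_le (n : ℕ) : poch (5/2) n ≤ ((n : ℝ) + 1) ^ 2 * n.factorial := by
  induction n with
  | zero => norm_num [poch]
  | succ n ih =>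
      rw [poch, Nat.factorial_succ]
      push_cast
      have h1 : (0:ℝ) ≤ (n:ℝ) := Nat.cast_nonneg n
      have h2 : (0:ℝ) < (n.factorial : ℝ) := by positivity
      have h3 : poch (5/2) n * (5/2 + n) ≤ (((n:ℝ)+1) ^ 2 * n.factorial) * (5/2 + n) := by
        apply mul_le_mul_of_nonneg_right ih (by linarith)
      calc poch (5/2) n * (5/2 + (n:ℝ)) ≤ (((n:ℝ)+1) ^ 2 * n.factorial) * (5/2 + n) := h3
        _ ≤ ((n:ℝ) + 1 + 1) ^ 2 * (((n:ℝ) + 1) * n.factorial) := by nlinarith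

lemma poch_rel (n : ℕ) : (2 * (n : ℝ) + 3) * poch (3/2) n = 3 * poch (5/2) n := by
  induction n with
  | zero => norm_num [poch]
  | succ n ih =>
      rw [poch, poch]
      push_cast
      nlinarith [ih]

/-- the double-factorial style coefficient appearing in the statement -/
noncomputable def cf (p : ℕ) : ℝ :=
  (((Nat.factorial (2 * (p + 1)) : ℝ) /
    (2 ^ (p + 1) * (Nat.factorial (p + 1) : ℝ))) / (Nat.factorial p : ℝ))

lemma fact_two_mul (p : ℕ) :
    ((Nat.factorial (2 * (p + 1)) : ℝ))
      = poch (3/2) p * 2 ^ p * (2 ^ (p + 1) * ((p + 1).factorial : ℝ)) := by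
  induction p with
  | zero => norm_num [poch]
  | succ p ih =>
      have h1 : 2 * (p + 1 + 1) = (2 * (p + 1) + 1) + 1 := by ring
      have e1 : (((2 * (p + 1) + 1) + 1).factorial : ℝ)
          = (2 * (p:ℝ) + 4) * ((2 * (p:ℝ) + 3) * ((2 * (p + 1)).factorial : ℝ)) := by
        rw [Nat.factorial_succ, Nat.factorial_succ]
        push_cast
        ring
      have e2 : (((p + 1) + 1).factorial : ℝ) = ((p:ℝ) + 2) * (((p + 1)).factorial : ℝ) := by
        rw [Nat.factorial_succ]
        push_cast
        ring
      rw [h1, e1, ih, poch, e2]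
      push_cast
      ring

lemma cf_eq (p : ℕ) : cf p = 2 ^ p * poch (3/2) p / (p.factorial : ℝ) := by
  have h2 : ((p + 1).factorial : ℝ) ≠ 0 := by positivity
  have h3 : (p.factorial : ℝ) ≠ 0 := by positivity
  rw [cf, fact_two_mul]
  field_simp

lemma cf_def (p : ℕ) :
    (((Nat.factorial (2 * (p + 1)) : ℝ) /
      (2 ^ (p + 1) * (Nat.factorial (p + 1) : ℝ))) / (Nat.factorial p : ℝ)) = cf p := rfl

lemma cf_nonneg (p : ℕ) : 0 ≤ cf p := by
  rw [cf]; positivity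

lemma hasSumF {t x : ℝ} (ht : 0 < t) (hx : 4 * t < x) :
    HasSum (fun p : ℕ => cf p / x ^ (p + 2) * (2 * t) ^ (p + 1))
      (2 * t / x ^ 2 * (1 - 4 * t / x) ^ (-(3/2 : ℝ))) := by
  have hx0 : 0 < x := by linarith
  have hu0 : 0 < 4 * t / x := by positivity
  have hu1 : 4 * t / x < 1 := (div_lt_one hx0).2 hx
  have hu : |4 * t / x| < 1 := by rw [abs_of_pos hu0]; exact hu1
  have hb := (binom_series (by norm_num : (0:ℝ) < 3/2) 1 poch32_le hu).mul_left (2 * t / x ^ 2)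
  have key : (fun p : ℕ => cf p / x ^ (p + 2) * (2 * t) ^ (p + 1))
      = (fun p : ℕ => 2 * t / x ^ 2 * (poch (3/2) p / (p.factorial : ℝ) * (4 * t / x) ^ p)) := by
    funext p
    have h44 : (4:ℝ) ^ p = 2 ^ p * 2 ^ p := by rw [← mul_pow]; norm_num
    have h4 : (4 * t / x) ^ p = 2 ^ p * 2 ^ p * t ^ p / x ^ p := by
      rw [div_pow, mul_pow, h44]
    have hxne : x ≠ 0 := hx0.ne'
    have hfne : (p.factorial : ℝ) ≠ 0 := by positivity
    have hxp : x ^ p ≠ 0 := pow_ne_zero _ hxne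
    rw [cf_eq, h4]
    field_simp
    ring
  rw [key]
  exact hb

lemma hasSumG {t x : ℝ} (ht : 0 < t) (hx : 4 * t < x) :
    HasSum (fun p : ℕ => ((p : ℝ) + 1) * (cf p / x ^ (p + 2) * (2 * t) ^ (p + 1)))
      (2 * t / x ^ 2 * (3/2 * (1 - 4 * t / x) ^ (-(5/2 : ℝ))
        - 1/2 * (1 - 4 * t / x) ^ (-(3/2 : ℝ)))) := by
  have hx0 : 0 < x := by linarith
  have hu0 : 0 < 4 * t / x := by positivity
  have hu1 : 4 * t / x < 1 := (div_lt_one hx0).2 hx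
  have hu : |4 * t / x| < 1 := by rw [abs_of_pos hu0]; exact hu1
  have hb5 := (binom_series (by norm_num : (0:ℝ) < 5/2) 2 poch52_le hu).mul_left (3/2 : ℝ)
  have hb3 := (binom_series (by norm_num : (0:ℝ) < 3/2) 1 poch32_le hu).mul_left (1/2 : ℝ)
  have hb := (hb5.sub hb3).mul_left (2 * t / x ^ 2)
  have key : (fun p : ℕ => ((p : ℝ) + 1) * (cf p / x ^ (p + 2) * (2 * t) ^ (p + 1)))
      = (fun p : ℕ => 2 * t / x ^ 2 *
          (3/2 * (poch (5/2) p / (p.factorial : ℝ) * (4 * t / x) ^ p)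
            - 1/2 * (poch (3/2) p / (p.factorial : ℝ) * (4 * t / x) ^ p))) := by
    funext p
    have h44 : (4:ℝ) ^ p = 2 ^ p * 2 ^ p := by rw [← mul_pow]; norm_num
    have h4 : (4 * t / x) ^ p = 2 ^ p * 2 ^ p * t ^ p / x ^ p := by
      rw [div_pow, mul_pow, h44]
    have hxne : x ≠ 0 := hx0.ne'
    have hfne : (p.factorial : ℝ) ≠ 0 := by positivity
    have hxp : x ^ p ≠ 0 := pow_ne_zero _ hxne
    have hrel : poch (5/2) p = (2 * (p : ℝ) + 3) * poch (3/2) p / 3 := by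
      rw [eq_div_iff (by norm_num : (3:ℝ) ≠ 0)]
      linarith [poch_rel p]
    rw [cf_eq, h4, hrel]
    field_simp
    ring
  rw [key]
  exact hb

set_option maxHeartbeats 1000000 in
lemma hasSum_prod4 {f₀ f₁ f₂ f₃ : ℕ → ℝ} {v₀ v₁ v₂ v₃ : ℝ}
    (h₀ : HasSum f₀ v₀) (h₁ : HasSum f₁ v₁) (h₂ : HasSum f₂ v₂) (h₃ : HasSum f₃ v₃)
    (n₀ : ∀ n, 0 ≤ f₀ n) (n₁ : ∀ n, 0 ≤ f₁ n) (n₂ : ∀ n, 0 ≤ f₂ n) (n₃ : ∀ n, 0 ≤ f₃ n) :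
    HasSum (fun q : ℕ × ℕ × ℕ × ℕ => f₀ q.1 * (f₁ q.2.1 * (f₂ q.2.2.1 * f₃ q.2.2.2)))
      (v₀ * (v₁ * (v₂ * v₃))) := by
  have h23 : HasSum (fun q : ℕ × ℕ => f₂ q.1 * f₃ q.2) (v₂ * v₃) :=
    h₂.mul h₃ (h₂.summable.mul_of_nonneg h₃.summable n₂ n₃)
  have n23 : ∀ q : ℕ × ℕ, 0 ≤ f₂ q.1 * f₃ q.2 := fun q => mul_nonneg (n₂ _) (n₃ _)
  have h123 : HasSum (fun q : ℕ × ℕ × ℕ => f₁ q.1 * (f₂ q.2.1 * f₃ q.2.2)) (v₁ * (v₂ * v₃)) :=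
    h₁.mul h23 (h₁.summable.mul_of_nonneg h23.summable n₁ n23)
  have n123 : ∀ q : ℕ × ℕ × ℕ, 0 ≤ f₁ q.1 * (f₂ q.2.1 * f₃ q.2.2) := fun q =>
    mul_nonneg (n₁ _) (mul_nonneg (n₂ _) (n₃ _))
  exact h₀.mul h123 (h₀.summable.mul_of_nonneg h123.summable n₀ n123)

set_option maxHeartbeats 2000000

/-- Taylor expansion of the genus-zero four-point function `G_{0,4}` of the modified GUE
model, where `(2m-1)!! = (2m)!/(2^m·m!)` and `e_i` are the elementary symmetric polynomials
in `x₀,x₁,x₂,x₃`; the series over `n₀,n₁,n₂,n₃ ≥ 1` is indexed here by `n_j = p_j + 1`. -/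
theorem stmt_15 (t x₀ x₁ x₂ x₃ : ℝ) (ht : 0 < t)
    (h0 : 4 * t < x₀) (h1 : 4 * t < x₁) (h2 : 4 * t < x₂) (h3 : 4 * t < x₃) :
    HasSum (fun p : ℕ × ℕ × ℕ × ℕ =>
      2 ^ (p.1 + p.2.1 + p.2.2.1 + p.2.2.2 + 3) * t ^ (p.1 + p.2.1 + p.2.2.1 + p.2.2.2 + 2) *
        ((p.1 : ℝ) + (p.2.1 : ℝ) + (p.2.2.1 : ℝ) + (p.2.2.2 : ℝ) + 3) *
        ((((Nat.factorial (2 * (p.1 + 1)) : ℝ) /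
            (2 ^ (p.1 + 1) * (Nat.factorial (p.1 + 1) : ℝ))) / (Nat.factorial p.1 : ℝ)) /
          x₀ ^ (p.1 + 2)) *
        ((((Nat.factorial (2 * (p.2.1 + 1)) : ℝ) /
            (2 ^ (p.2.1 + 1) * (Nat.factorial (p.2.1 + 1) : ℝ))) / (Nat.factorial p.2.1 : ℝ)) /
          x₁ ^ (p.2.1 + 2)) *
        ((((Nat.factorial (2 * (p.2.2.1 + 1)) : ℝ) /
            (2 ^ (p.2.2.1 + 1) * (Nat.factorial (p.2.2.1 + 1) : ℝ))) /
            (Nat.factorial p.2.2.1 : ℝ)) /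
          x₂ ^ (p.2.2.1 + 2)) *
        ((((Nat.factorial (2 * (p.2.2.2 + 1)) : ℝ) /
            (2 ^ (p.2.2.2 + 1) * (Nat.factorial (p.2.2.2 + 1) : ℝ))) /
            (Nat.factorial p.2.2.2 : ℝ)) /
          x₃ ^ (p.2.2.2 + 2)))
      (24 * t ^ 2 *
        ((x₀ * x₁ * x₂ * x₃) -
          2 * (x₀ * x₁ * x₂ + x₀ * x₁ * x₃ + x₀ * x₂ * x₃ + x₁ * x₂ * x₃) * t +
          32 * (x₀ + x₁ + x₂ + x₃) * t ^ 3 - 256 * t ^ 4) /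
        (x₀ ^ 3 * (1 - 4 * t / x₀) ^ ((5 : ℝ) / 2) *
          (x₁ ^ 3 * (1 - 4 * t / x₁) ^ ((5 : ℝ) / 2)) *
          (x₂ ^ 3 * (1 - 4 * t / x₂) ^ ((5 : ℝ) / 2)) *
          (x₃ ^ 3 * (1 - 4 * t / x₃) ^ ((5 : ℝ) / 2)))) := by
  have hx₀ : 0 < x₀ := by linarith
  have hx₁ : 0 < x₁ := by linarith
  have hx₂ : 0 < x₂ := by linarith
  have hx₃ : 0 < x₃ := by linarith
  have hF0 := hasSumF ht h0
  have hF1 := hasSumF ht h1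
  have hF2 := hasSumF ht h2
  have hF3 := hasSumF ht h3
  have hG0 := hasSumG ht h0
  have hG1 := hasSumG ht h1
  have hG2 := hasSumG ht h2
  have hG3 := hasSumG ht h3
  have nnf : ∀ (x : ℝ), 0 < x → ∀ p : ℕ, 0 ≤ cf p / x ^ (p + 2) * (2 * t) ^ (p + 1) := by
    intro x hx p
    have := cf_nonneg p
    have h2t : (0:ℝ) ≤ 2 * t := by linarith
    exact mul_nonneg (div_nonneg this (by positivity)) (pow_nonneg h2t _)
  have nng : ∀ (x : ℝ), 0 < x → ∀ p : ℕ,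
      0 ≤ ((p : ℝ) + 1) * (cf p / x ^ (p + 2) * (2 * t) ^ (p + 1)) := by
    intro x hx p
    exact mul_nonneg (by positivity) (nnf x hx p)
  have s1 := hasSum_prod4 hG0 hF1 hF2 hF3 (nng x₀ hx₀) (nnf x₁ hx₁) (nnf x₂ hx₂) (nnf x₃ hx₃)
  have s2 := hasSum_prod4 hF0 hG1 hF2 hF3 (nnf x₀ hx₀) (nng x₁ hx₁) (nnf x₂ hx₂) (nnf x₃ hx₃)
  have s3 := hasSum_prod4 hF0 hF1 hG2 hF3 (nnf x₀ hx₀) (nnf x₁ hx₁) (nng x₂ hx₂) (nnf x₃ hx₃)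
  have s4 := hasSum_prod4 hF0 hF1 hF2 hG3 (nnf x₀ hx₀) (nnf x₁ hx₁) (nnf x₂ hx₂) (nng x₃ hx₃)
  have s5 := hasSum_prod4 hF0 hF1 hF2 hF3 (nnf x₀ hx₀) (nnf x₁ hx₁) (nnf x₂ hx₂) (nnf x₃ hx₃)
  have total := ((((s1.add s2).add s3).add s4).sub s5).mul_left (1 / (2 * t ^ 2))
  convert total using 1
  · exact rfl
  · funext q
    obtain ⟨a, b, c, d⟩ := q
    simp only [cf_def]
    field_simp
    ring
  · have hw₀ : 0 < 1 - 4 * t / x₀ := by rw [sub_pos, div_lt_one hx₀]; exact h0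
    have hw₁ : 0 < 1 - 4 * t / x₁ := by rw [sub_pos, div_lt_one hx₁]; exact h1
    have hw₂ : 0 < 1 - 4 * t / x₂ := by rw [sub_pos, div_lt_one hx₂]; exact h2
    have hw₃ : 0 < 1 - 4 * t / x₃ := by rw [sub_pos, div_lt_one hx₃]; exact h3
    have e52 : ∀ w : ℝ, 0 < w → w ^ (-(5/2 : ℝ)) = 1 / w ^ ((5:ℝ)/2) := by
      intro w hw
      rw [one_div, ← Real.rpow_neg hw.le]
    have e32 : ∀ w : ℝ, 0 < w → w ^ (-(3/2 : ℝ)) = w / w ^ ((5:ℝ)/2) := by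
      intro w hw
      rw [show (-(3/2 : ℝ)) = 1 + -((5:ℝ)/2) by norm_num, Real.rpow_add hw, Real.rpow_one,
        Real.rpow_neg hw.le]
      ring
    rw [e32 _ hw₀, e32 _ hw₁, e32 _ hw₂, e32 _ hw₃, e52 _ hw₀, e52 _ hw₁, e52 _ hw₂, e52 _ hw₃]
    have hW₀ : 0 < (1 - 4 * t / x₀) ^ ((5:ℝ)/2) := Real.rpow_pos_of_pos hw₀ _
    have hW₁ : 0 < (1 - 4 * t / x₁) ^ ((5:ℝ)/2) := Real.rpow_pos_of_pos hw₁ _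
    have hW₂ : 0 < (1 - 4 * t / x₂) ^ ((5:ℝ)/2) := Real.rpow_pos_of_pos hw₂ _
    have hW₃ : 0 < (1 - 4 * t / x₃) ^ ((5:ℝ)/2) := Real.rpow_pos_of_pos hw₃ _
    set W₀ : ℝ := (1 - 4 * t / x₀) ^ ((5:ℝ)/2)
    set W₁ : ℝ := (1 - 4 * t / x₁) ^ ((5:ℝ)/2)
    set W₂ : ℝ := (1 - 4 * t / x₂) ^ ((5:ℝ)/2)
    set W₃ : ℝ := (1 - 4 * t / x₃) ^ ((5:ℝ)/2)
    field_simp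
    ring
end
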